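/- Let G be a d-regular finite simple graph on n vertices with d ≥ 2. Then ls_σ^t(G) ≤ ⌈(2e(d+1)(n−d))^{1/d}⌉, where e is Euler's number: for k = ⌈(2e(d+1)(n−d))^{1/d}⌉, for every linear order on the disjoint union V(G) ∪ E(G) and every assignment to each vertex and each edge of a set of k real numbers, there exists a total weighting taking each weight from its assigned set such that all vertices of G receive pairwise distinct induced total sequences. -/

import Mathlib

/-!
Common definitions: total sequence colourings induced by a total weighting and a linear
order on the disjoint union `V(G) ⊕ E(G)` of a finite simple graph.
-/

open Finset

variable {V : Type*}

/-- The elements of `V(G) ⊕ E(G)` relevant to the vertex `v` (namely `v` itself together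
with the edges incident to `v`), sorted in increasing order with respect to the linear
order `σ` on `V(G) ⊕ E(G)`. -/
noncomputable def incTotal [Fintype V] [DecidableEq V] (G : SimpleGraph V) [DecidableRel G.Adj]
    (σ : LinearOrder (V ⊕ G.edgeSet)) (v : V) : List (V ⊕ G.edgeSet) :=
  letI := σ
  letI : DecidablePred (fun x : V ⊕ G.edgeSet =>
      Sum.elim (fun u : V => u = v) (fun e : G.edgeSet => v ∈ (e : Sym2 V)) x) :=
    Classical.decPred _
  ((Finset.univ : Finset (V ⊕ G.edgeSet)).filter
    (fun x : V ⊕ G.edgeSet =>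
      Sum.elim (fun u : V => u = v) (fun e : G.edgeSet => v ∈ (e : Sym2 V)) x)).sort σ.le

/-- The induced total sequence colouring: `c(v)` consists of `w(v)` together with the
weights `w(e)` of the edges `e` incident to `v`, all written in increasing order with
respect to `σ`. -/
noncomputable def totalSeqColor [Fintype V] [DecidableEq V] (G : SimpleGraph V)
    [DecidableRel G.Adj] (σ : LinearOrder (V ⊕ G.edgeSet)) (w : V ⊕ G.edgeSet → ℝ) (v : V) :
    List ℝ :=
  (incTotal G σ v).map w

/-- The induced total sequence colouring is proper: adjacent vertices receive distinct
sequences. -/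
def ProperTotalSeq [Fintype V] [DecidableEq V] (G : SimpleGraph V) [DecidableRel G.Adj]
    (σ : LinearOrder (V ⊕ G.edgeSet)) (w : V ⊕ G.edgeSet → ℝ) : Prop :=
  ∀ u v : V, G.Adj u v → totalSeqColor G σ w u ≠ totalSeqColor G σ w v

/-!
Symmetric Lovász Local Lemma on the finite product `∏ₓ L x` of weight lists, each of size `k`.
For distinct vertices `u, v` the bad event `c(u) = c(v)` depends only on the weights of `u`,
`v` and their incident edges. When it occurs, the `d` weights at `u` not shared with `v` are
determined by the other weights, so its probability is at most `k ^ (-d)`. It is independent of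
the events of all pairs avoiding the closed neighbourhoods of `u` and `v`, which leaves fewer
than `C(n, 2) - C(n - 2d - 2, 2) < 2 (d + 1) (n - d)` other events when `n ≥ 2d + 2`; the
choice of `k` makes `e k ^ (-d) 2 (d + 1) (n - d) ≤ 1`. When `n ≤ 2d + 1` the union bound over
the `C(n, 2)` pairs suffices.
-/

section ProductSpace

variable {κ α : Type*} [Fintype κ] [DecidableEq κ] {L : κ → Finset α}

lemma piecewise_mem_piFinset (T : Finset κ) {a b : κ → α} (ha : a ∈ Fintype.piFinset L)
    (hb : b ∈ Fintype.piFinset L) : T.piecewise a b ∈ Fintype.piFinset L := by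
  rw [Fintype.mem_piFinset] at *
  exact fun x => T.piecewise_cases a b (· ∈ L x) (ha x) (hb x)

/-- Independence, under the uniform measure on the product, of events depending on disjoint
sets of coordinates. -/
theorem card_filter_filter_mul_card_piFinset {F G : (κ → α) → Prop} [DecidablePred F]
    [DecidablePred G] {T : Finset κ} (hF : DependsOn F T) (hG : DependsOn G (↑T)ᶜ) :
    #(((Fintype.piFinset L).filter G).filter F) * #(Fintype.piFinset L) =
      #((Fintype.piFinset L).filter F) * #((Fintype.piFinset L).filter G) := by
  have hFpw (a b : κ → α) : F (T.piecewise a b) = F a :=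
    hF fun i hi => T.piecewise_eq_of_mem a b hi
  have hGpw (a b : κ → α) : G (T.piecewise a b) = G b :=
    hG fun i hi => T.piecewise_eq_of_notMem a b hi
  rw [← card_product, ← card_product]
  refine card_nbij' (fun ab => (T.piecewise ab.1 ab.2, T.piecewise ab.2 ab.1))
    (fun ab => (T.piecewise ab.1 ab.2, T.piecewise ab.2 ab.1)) ?_ ?_ ?_ ?_
  · rintro ⟨a, b⟩ h
    simp only [coe_product, Set.mem_prod, mem_coe, mem_filter] at h ⊢
    refine ⟨⟨piecewise_mem_piFinset T h.1.1.1 h.2, ?_⟩,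
      piecewise_mem_piFinset T h.2 h.1.1.1, ?_⟩
    · rw [hFpw]; exact h.1.2
    · rw [hGpw]; exact h.1.1.2
  · rintro ⟨a, b⟩ h
    simp only [coe_product, Set.mem_prod, mem_coe, mem_filter] at h ⊢
    refine ⟨⟨⟨piecewise_mem_piFinset T h.1.1 h.2.1, ?_⟩, ?_⟩,
      piecewise_mem_piFinset T h.2.1 h.1.1⟩
    · rw [hGpw]; exact h.2.2
    · rw [hFpw]; exact h.1.2
  all_goals
    rintro ⟨a, b⟩ -
    simp [piecewise_idem_left, piecewise_idem_right, piecewise_same]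

lemma card_mul_prod_card_le_card_piFinset {B : Finset (κ → α)} (hB : B ⊆ Fintype.piFinset L)
    (F : Finset κ) (hF : ∀ w ∈ B, ∀ w' ∈ B, (∀ x ∉ F, w x = w' x) → w = w') :
    #B * ∏ x ∈ F, #(L x) ≤ #(Fintype.piFinset L) := by
  rcases B.eq_empty_or_nonempty with rfl | ⟨w₀, hw₀⟩
  · simp
  let L' : κ → Finset α := fun x => if x ∈ F then {w₀ x} else L x
  have hB' : #B ≤ #(Fintype.piFinset L') := by
    refine card_le_card_of_injOn (fun w => F.piecewise w₀ w) (fun w hw => ?_)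
      fun w hw w' hw' h => hF w hw w' hw' fun x hx => by simpa [hx] using congrFun h x
    refine Fintype.mem_piFinset.mpr fun x => ?_
    by_cases hx : x ∈ F
    · simp [L', hx]
    · simpa [L', hx] using Fintype.mem_piFinset.mp (hB hw) x
  have hL' : #(Fintype.piFinset L') = ∏ x ∈ Fᶜ, #(L x) := by
    rw [Fintype.card_piFinset, ← prod_compl_mul_prod F,
      prod_congr rfl fun x hx => (by simp [L', mem_compl.mp hx] : #(L' x) = #(L x)),
      prod_congr rfl fun x hx => (by simp [L', hx] : #(L' x) = 1), prod_const_one, mul_one]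
  calc #B * ∏ x ∈ F, #(L x) ≤ (∏ x ∈ Fᶜ, #(L x)) * ∏ x ∈ F, #(L x) :=
        Nat.mul_le_mul_right _ (hL' ▸ hB')
    _ = #(Fintype.piFinset L) := by rw [prod_compl_mul_prod, Fintype.card_piFinset]

end ProductSpace

lemma dependsOn_forall_not {κ α ι : Type*} [DecidableEq κ] {P : ι → (κ → α) → Prop}
    {T : ι → Finset κ} {S : Finset ι} (hP : ∀ i ∈ S, DependsOn (P i) (T i)) :
    DependsOn (fun w => ∀ i ∈ S, ¬ P i w) ↑(S.biUnion T) := by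
  intro w w' h
  refine propext <| forall₂_congr fun i hi => ?_
  rw [hP i hi fun x hx => h x (by simp only [coe_biUnion]; exact Set.mem_biUnion hi hx)]

lemma pow_card_mul_le_of_forall_insert {ι : Type*} [DecidableEq ι] {g : Finset ι → ℝ}
    {c : ℝ} (hc : 0 ≤ c) {C B : Finset ι} (hCB : Disjoint C B)
    (h : ∀ S ⊂ C ∪ B, ∀ a ∈ B, a ∉ S → c * g S ≤ g (insert a S)) :
    c ^ #B * g C ≤ g (C ∪ B) := by
  induction B using Finset.induction_on with
  | empty => simp
  | @insert a B ha ih =>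
    have haCB : a ∉ C ∪ B := by
      simp [disjoint_right.mp hCB (mem_insert_self a B), ha]
    have hsub : C ∪ B ⊂ C ∪ insert a B := union_insert a C B ▸ ssubset_insert haCB
    have hB := ih (disjoint_of_subset_right (subset_insert a B) hCB)
      fun S hS b hb => h S (hS.trans hsub) b (mem_insert_of_mem hb)
    calc c ^ #(insert a B) * g C = c * (c ^ #B * g C) := by rw [card_insert_of_notMem ha]; ring
      _ ≤ c * g (C ∪ B) := mul_le_mul_of_nonneg_left hB hc
      _ ≤ g (C ∪ insert a B) := union_insert a C B ▸ h _ hsub a (mem_insert_self a B) haCB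

lemma inv_exp_one_mul_le (D : ℕ) :
    (Real.exp 1 * (D + 1))⁻¹ ≤ ((D : ℝ) + 2)⁻¹ * (1 - ((D : ℝ) + 2)⁻¹) ^ D := by
  have h1 : 1 - ((D : ℝ) + 2)⁻¹ = (D + 1) / (D + 2) := by field_simp; ring
  have h2 : 1 + ((D + 1 : ℕ) : ℝ)⁻¹ = (D + 2) / (D + 1) := by push_cast; field_simp; ring
  have key : ((D : ℝ) + 2)⁻¹ * (1 - ((D : ℝ) + 2)⁻¹) ^ D =
      ((D : ℝ) + 1)⁻¹ * ((1 + ((D + 1 : ℕ) : ℝ)⁻¹) ^ (D + 1))⁻¹ := by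
    rw [h1, h2, div_pow, div_pow, inv_div, pow_succ, pow_succ]
    field_simp
  rw [key, mul_inv, mul_comm]
  gcongr
  exact Real.one_add_inv_pow_le_exp

theorem exists_forall_not_of_sum_card_lt {β ι : Type*} {Ω : Finset β} {I : Finset ι}
    {P : ι → β → Prop} [∀ i, DecidablePred (P i)]
    (h : ∑ i ∈ I, #(Ω.filter (P i)) < #Ω) :
    ∃ w ∈ Ω, ∀ i ∈ I, ¬ P i w := by
  classical
  obtain ⟨w, hw, hwI⟩ := exists_mem_notMem_of_card_lt_card (card_biUnion_le.trans_lt h)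
  simp only [mem_biUnion, mem_filter, not_exists, not_and] at hwI
  exact ⟨w, hw, fun i hi => hwI i hi hw⟩

section LocalLemma

variable {κ α ι : Type*} [Fintype κ] [DecidableEq κ] (L : κ → Finset α)
  (P : ι → (κ → α) → Prop) [∀ i, DecidablePred (P i)]

def avoiding (S : Finset ι) : Finset (κ → α) :=
  (Fintype.piFinset L).filter fun w => ∀ i ∈ S, ¬ P i w

@[simp] lemma avoiding_empty : avoiding L P ∅ = Fintype.piFinset L := by
  simp [avoiding]

lemma avoiding_insert [DecidableEq ι] (i : ι) (S : Finset ι) :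
    avoiding L P (insert i S) = (avoiding L P S).filter fun w => ¬ P i w := by
  simp only [avoiding, filter_filter, forall_mem_insert, and_comm]

lemma avoiding_anti {S S' : Finset ι} (h : S ⊆ S') : avoiding L P S' ⊆ avoiding L P S := by
  intro w hw
  simp only [avoiding, mem_filter] at hw ⊢
  exact ⟨hw.1, fun i hi => hw.2 i (h hi)⟩

variable {L P} {T : ι → Finset κ} {p : ℝ}

lemma card_filter_avoiding_le {i : ι} {S S' : Finset ι} (hS' : S' ⊆ S)
    (hΩ : (Fintype.piFinset L).Nonempty) (hPi : DependsOn (P i) (T i))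
    (hPS' : ∀ j ∈ S', DependsOn (P j) (T j))
    (hp : #((Fintype.piFinset L).filter (P i)) ≤ p * #(Fintype.piFinset L))
    (hdisj : ∀ j ∈ S', Disjoint (T i) (T j)) :
    #((avoiding L P S).filter (P i)) ≤ p * #(avoiding L P S') := by
  have hG : DependsOn (fun w => ∀ j ∈ S', ¬ P j w) (↑(T i))ᶜ :=
    (dependsOn_forall_not hPS').mono <| by
      simpa [← coe_biUnion, Set.subset_compl_iff_disjoint_left, ← disjoint_coe] using
        (disjoint_biUnion_right _ _ _).mpr hdisj
  have hind : (#((avoiding L P S').filter (P i)) : ℝ) * #(Fintype.piFinset L) =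
      #((Fintype.piFinset L).filter (P i)) * #(avoiding L P S') := by
    exact_mod_cast card_filter_filter_mul_card_piFinset (L := L) hPi hG
  have hΩpos : (0 : ℝ) < #(Fintype.piFinset L) := by exact_mod_cast hΩ.card_pos
  calc (#((avoiding L P S).filter (P i)) : ℝ) ≤ #((avoiding L P S').filter (P i)) := by
        exact_mod_cast card_le_card (filter_subset_filter _ (avoiding_anti L P hS'))
    _ ≤ p * #(avoiding L P S') := by
        refine le_of_mul_le_mul_right ?_ hΩpos
        rw [hind]
        nlinarith

variable [DecidableEq ι] {I : Finset ι} {D : ℕ} {x : ℝ}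

/-- The inductive step of the Local Lemma: the events of `S` that share coordinates with `P i`
are re-inserted one at a time, each costing a factor `1 - x`. -/
lemma one_sub_mul_card_avoiding_le (hΩ : (Fintype.piFinset L).Nonempty)
    (hP : ∀ i ∈ I, DependsOn (P i) (T i))
    (hp : ∀ i ∈ I, #((Fintype.piFinset L).filter (P i)) ≤ p * #(Fintype.piFinset L))
    (hD : ∀ i ∈ I, #((I.erase i).filter fun j => ¬ Disjoint (T i) (T j)) ≤ D)
    (hx0 : 0 ≤ x) (hx1 : x ≤ 1) (hpx : p ≤ x * (1 - x) ^ D) :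
    ∀ S ⊆ I, ∀ i ∈ I, i ∉ S →
      (1 - x) * #(avoiding L P S) ≤ #(avoiding L P (insert i S)) := by
  intro S
  induction S using Finset.strongInduction with
  | H S ih =>
  intro hSI i hi hiS
  set S₁ := S.filter fun j => ¬ Disjoint (T i) (T j)
  set S₂ := S.filter fun j => Disjoint (T i) (T j)
  have hS : S₂ ∪ S₁ = S := filter_union_filter_not_eq _ S
  have hchain : (1 - x) ^ #S₁ * #(avoiding L P S₂) ≤ (#(avoiding L P S) : ℝ) := by
    rw [← hS]
    refine pow_card_mul_le_of_forall_insert (g := fun S => (#(avoiding L P S) : ℝ))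
      (by linarith) (disjoint_filter_filter_not S S _) fun S' hS' a ha haS' => ?_
    rw [hS] at hS'
    exact ih S' hS' (hS'.subset.trans hSI) a (hSI (mem_filter.mp ha).1) haS'
  have hS₁ : #S₁ ≤ D := by
    refine (card_le_card fun j hj => ?_).trans (hD i hi)
    simp only [S₁, mem_filter] at hj
    exact mem_filter.mpr ⟨mem_erase.mpr ⟨fun h => hiS (h ▸ hj.1), hSI hj.1⟩, hj.2⟩
  have hbad : (#((avoiding L P S).filter (P i)) : ℝ) ≤ x * #(avoiding L P S) :=
    calc (#((avoiding L P S).filter (P i)) : ℝ) ≤ p * #(avoiding L P S₂) :=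
          card_filter_avoiding_le (hS ▸ subset_union_left) hΩ (hP i hi)
            (fun j hj => hP j (hSI (mem_filter.mp hj).1)) (hp i hi)
            fun j hj => (mem_filter.mp hj).2
      _ ≤ x * (1 - x) ^ #S₁ * #(avoiding L P S₂) := by
          gcongr
          exact hpx.trans (mul_le_mul_of_nonneg_left
            (pow_le_pow_of_le_one (by linarith) (by linarith) hS₁) hx0)
      _ ≤ x * #(avoiding L P S) := by
          rw [mul_assoc]; exact mul_le_mul_of_nonneg_left hchain hx0
  have hsplit : (#((avoiding L P S).filter (P i)) : ℝ) + #(avoiding L P (insert i S)) =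
      #(avoiding L P S) := by
    rw [avoiding_insert]; exact_mod_cast card_filter_add_card_filter_not _
  linarith

theorem exists_forall_not_of_localLemma (hΩ : (Fintype.piFinset L).Nonempty)
    (hP : ∀ i ∈ I, DependsOn (P i) (T i))
    (hp : ∀ i ∈ I, #((Fintype.piFinset L).filter (P i)) ≤ p * #(Fintype.piFinset L))
    (hD : ∀ i ∈ I, #((I.erase i).filter fun j => ¬ Disjoint (T i) (T j)) ≤ D)
    (hx0 : 0 ≤ x) (hx1 : x < 1) (hpx : p ≤ x * (1 - x) ^ D) :
    ∃ w ∈ Fintype.piFinset L, ∀ i ∈ I, ¬ P i w := by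
  have key := one_sub_mul_card_avoiding_le hΩ hP hp hD hx0 hx1.le hpx
  have hpos : 0 < (#(avoiding L P I) : ℝ) := by
    refine Finset.induction_on' (motive := fun S => 0 < (#(avoiding L P S) : ℝ)) I ?_ ?_
    · rw [avoiding_empty]; exact_mod_cast hΩ.card_pos
    · exact fun i S hi hS hiS ih => (mul_pos (by linarith) ih).trans_le (key S hS i hi hiS)
  obtain ⟨w, hw⟩ := card_pos.mp (by exact_mod_cast hpos)
  simp only [avoiding, mem_filter] at hw
  exact ⟨w, hw⟩

theorem exists_forall_not_of_symmetric_localLemma (hΩ : (Fintype.piFinset L).Nonempty)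
    (hP : ∀ i ∈ I, DependsOn (P i) (T i))
    (hp : ∀ i ∈ I, #((Fintype.piFinset L).filter (P i)) ≤ p * #(Fintype.piFinset L))
    (hD : ∀ i ∈ I, #((I.erase i).filter fun j => ¬ Disjoint (T i) (T j)) ≤ D)
    (hpD : Real.exp 1 * p * (D + 1) ≤ 1) :
    ∃ w ∈ Fintype.piFinset L, ∀ i ∈ I, ¬ P i w := by
  -- `x = 1 / (D + 2)` rather than the usual `1 / (D + 1)`, so that `x < 1` also for `D = 0`.
  refine exists_forall_not_of_localLemma hΩ hP hp hD (x := ((D : ℝ) + 2)⁻¹) (by positivity)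
    (inv_lt_one_of_one_lt₀ (by linarith [D.cast_nonneg (α := ℝ)])) ?_
  calc p ≤ (Real.exp 1 * (D + 1))⁻¹ := by
        rw [← one_div, le_div_iff₀ (by positivity)]; linarith
    _ ≤ _ := inv_exp_one_mul_le D

end LocalLemma

lemma le_natCeil_rpow_one_div_pow {x : ℝ} (hx : 0 ≤ x) {d : ℕ} (hd : d ≠ 0) :
    x ≤ (⌈x ^ ((1 : ℝ) / d)⌉₊ : ℝ) ^ d := by
  calc x = (x ^ ((1 : ℝ) / d)) ^ d := by
        rw [← Real.rpow_natCast, ← Real.rpow_mul hx, one_div_mul_cancel (by positivity),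
          Real.rpow_one]
    _ ≤ (⌈x ^ ((1 : ℝ) / d)⌉₊ : ℝ) ^ d := by
        gcongr
        exact Nat.le_ceil _

lemma choose_two_le_choose_two_sub_add {n d : ℕ} (h : 2 * (d + 1) ≤ n) :
    n.choose 2 ≤ (n - 2 * (d + 1)).choose 2 + 2 * (d + 1) * (n - d) := by
  obtain ⟨m, rfl⟩ := Nat.exists_eq_add_of_le' h
  rw [Nat.add_sub_cancel, show m + 2 * (d + 1) - d = m + d + 2 by omega]
  have : ((m + 2 * (d + 1)).choose 2 : ℝ) ≤ m.choose 2 + 2 * (d + 1) * (m + d + 2) := by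
    rw [Nat.cast_choose_two, Nat.cast_choose_two]
    push_cast
    nlinarith
  exact_mod_cast this

lemma mul_two_mul_add_one_lt_two_pow {d : ℕ} (hd : 7 ≤ d) : d * (2 * d + 1) < 2 ^ d := by
  induction d, hd using Nat.le_induction with
  | base => norm_num
  | succ d hd ih => rw [pow_succ]; nlinarith

/-- Either `d ≤ 10` and `C(n, 2)` is below the radicand itself, or `d > 10`, the ceiling is at
least `2` and `2 ^ d > d (2d + 1) ≥ C(n, 2)`. -/
lemma choose_two_lt_natCeil_rpow_pow {n d : ℕ} (hd : 2 ≤ d) (hdn : d < n)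
    (hn : n < 2 * (d + 1)) :
    n.choose 2 <
      ⌈(2 * Real.exp 1 * ((d : ℝ) + 1) * ((n : ℝ) - d)) ^ ((1 : ℝ) / d)⌉₊ ^ d := by
  set X := 2 * Real.exp 1 * ((d : ℝ) + 1) * ((n : ℝ) - d)
  have hdn' : (d : ℝ) + 1 ≤ n := by exact_mod_cast hdn
  have hn' : (n : ℝ) ≤ 2 * d + 1 := by exact_mod_cast Nat.le_of_lt_succ hn
  have he := Real.exp_one_gt_d9
  have hX1 : 1 < X := by
    have h1 : 1 ≤ (n : ℝ) - d := by linarith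
    have h2 : (1 : ℝ) ≤ 2 * Real.exp 1 * (d + 1) := by nlinarith
    nlinarith
  have hX := le_natCeil_rpow_one_div_pow (zero_le_one.trans hX1.le) (d := d) (by omega)
  rw [← Nat.cast_lt (α := ℝ), Nat.cast_pow, Nat.cast_choose_two]
  rcases le_or_gt d 10 with hd10 | hd10
  · refine lt_of_lt_of_le ?_ hX
    have : (d : ℝ) ≤ 10 := by exact_mod_cast hd10
    have h1 : 0 ≤ ((d : ℝ) + 1) * (n - d) := by nlinarith
    have h2 : 2.7 * (((d : ℝ) + 1) * (n - d)) ≤ Real.exp 1 * (((d : ℝ) + 1) * (n - d)) :=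
      mul_le_mul_of_nonneg_right (by linarith) h1
    simp only [X]
    nlinarith [mul_nonneg (sub_nonneg.mpr hdn') (sub_nonneg.mpr hn'),
      mul_nonneg (sub_nonneg.mpr hdn') (by positivity : (0 : ℝ) ≤ d),
      mul_nonneg (sub_nonneg.mpr this) (by positivity : (0 : ℝ) ≤ d + 1)]
  · have hk : 2 ≤ ⌈X ^ ((1 : ℝ) / d)⌉₊ :=
      Nat.lt_ceil.mpr (by exact_mod_cast Real.one_lt_rpow hX1 (by positivity))
    have h2 : ((d * (2 * d + 1) : ℕ) : ℝ) < 2 ^ d := by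
      exact_mod_cast mul_two_mul_add_one_lt_two_pow (by omega)
    calc (n : ℝ) * (n - 1) / 2 ≤ d * (2 * d + 1) := by nlinarith
      _ < 2 ^ d := by exact_mod_cast h2
      _ ≤ (⌈X ^ ((1 : ℝ) / d)⌉₊ : ℝ) ^ d := by gcongr; exact_mod_cast hk

lemma card_filter_not_disjoint_powersetCard {α : Type*} [Fintype α] [DecidableEq α]
    (S : Finset α) (k : ℕ) :
    #((powersetCard k univ).filter fun t => ¬ Disjoint S t) =
      (Fintype.card α).choose k - (Fintype.card α - #S).choose k := by
  have hdisj : (powersetCard k univ).filter (fun t => Disjoint S t) = powersetCard k Sᶜ := by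
    ext t
    simp [mem_powersetCard, subset_compl_iff_disjoint_left, and_comm]
  have := card_filter_add_card_filter_not (s := powersetCard k univ) (fun t => ¬ Disjoint S t)
  simp only [not_not, hdisj, card_powersetCard, card_compl, card_univ] at this
  omega

section IncidenceSet

variable [Fintype V] (G : SimpleGraph V) [DecidableRel G.Adj]

noncomputable def incFinset (v : V) : Finset (V ⊕ G.edgeSet) :=
  letI : DecidablePred (fun x : V ⊕ G.edgeSet =>
      Sum.elim (fun u : V => u = v) (fun e : G.edgeSet => v ∈ (e : Sym2 V)) x) :=
    Classical.decPred _
  univ.filter fun x => Sum.elim (fun u : V => u = v) (fun e : G.edgeSet => v ∈ (e : Sym2 V)) x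

variable {G}

@[simp] lemma inl_mem_incFinset {u v : V} : Sum.inl u ∈ incFinset G v ↔ u = v := by
  simp [incFinset]

@[simp] lemma inr_mem_incFinset {e : G.edgeSet} {v : V} :
    Sum.inr e ∈ incFinset G v ↔ v ∈ (e : Sym2 V) := by
  simp [incFinset]

lemma mem_incTotal [DecidableEq V] (σ : LinearOrder (V ⊕ G.edgeSet)) {v : V}
    {x : V ⊕ G.edgeSet} : x ∈ incTotal G σ v ↔ x ∈ incFinset G v := by
  let _ := σ
  exact mem_sort (α := V ⊕ G.edgeSet) (· ≤ ·)

lemma totalSeqColor_eq_iff [DecidableEq V] (σ : LinearOrder (V ⊕ G.edgeSet))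
    {w w' : V ⊕ G.edgeSet → ℝ} {v : V} :
    totalSeqColor G σ w v = totalSeqColor G σ w' v ↔ ∀ x ∈ incFinset G v, w x = w' x := by
  simp only [totalSeqColor, List.map_eq_map_iff, mem_incTotal]

lemma card_incFinset [DecidableEq V] (v : V) : #(incFinset G v) = G.degree v + 1 := by
  have : incFinset G v =
      ({v} : Finset V).disjSum ((G.incidenceFinset v).subtype (· ∈ G.edgeSet)) := by
    ext (x | e) <;> simp [SimpleGraph.incidenceSet, eq_comm]
  rw [this, card_disjSum, card_singleton, card_subtype, filter_true_of_mem
    fun e he => G.incidenceSet_subset v (by simpa using he), G.card_incidenceFinset_eq_degree,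
    add_comm]

lemma card_inter_incFinset_le_one [DecidableEq V] {u v : V} (huv : u ≠ v) :
    #(incFinset G u ∩ incFinset G v) ≤ 1 := by
  refine card_le_one.mpr fun a ha b hb => ?_
  rcases a with a | e <;> rcases b with b | f <;>
    simp only [mem_inter, inl_mem_incFinset, inr_mem_incFinset] at ha hb
  · rw [ha.1, hb.1]
  · exact absurd (ha.1.symm.trans ha.2) huv
  · exact absurd (hb.1.symm.trans hb.2) huv
  · exact congrArg Sum.inr <| Subtype.ext <|
      ((Sym2.mem_and_mem_iff huv).mp ha).trans ((Sym2.mem_and_mem_iff huv).mp hb).symm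

lemma eq_or_adj_of_not_disjoint_incFinset {u v : V}
    (h : ¬ Disjoint (incFinset G u) (incFinset G v)) : v = u ∨ G.Adj u v := by
  obtain ⟨x, hxu, hxv⟩ := not_disjoint_iff.mp h
  rcases x with x | e
  · simp only [inl_mem_incFinset] at hxu hxv
    exact .inl (hxv.symm.trans hxu)
  · simp only [inr_mem_incFinset] at hxu hxv
    by_cases huv : u = v
    · exact .inl huv.symm
    · right
      have := e.2
      rwa [(Sym2.mem_and_mem_iff huv).mp ⟨hxu, hxv⟩, SimpleGraph.mem_edgeSet] at this

end IncidenceSet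

section Monochromatic

variable [Fintype V] [DecidableEq V] {G : SimpleGraph V} [DecidableRel G.Adj]
  {σ : LinearOrder (V ⊕ G.edgeSet)} {L : V ⊕ G.edgeSet → Finset ℝ} {k d : ℕ}

variable (G σ) in
def Monochromatic (s : Finset V) (w : V ⊕ G.edgeSet → ℝ) : Prop :=
  ∀ u ∈ s, ∀ v ∈ s, totalSeqColor G σ w u = totalSeqColor G σ w v

noncomputable instance (s : Finset V) : DecidablePred (Monochromatic G σ s) :=
  Classical.decPred _

lemma dependsOn_monochromatic (s : Finset V) :
    DependsOn (Monochromatic G σ s) ↑(s.biUnion (incFinset G)) := by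
  intro w w' h
  have hc : ∀ u ∈ s, totalSeqColor G σ w u = totalSeqColor G σ w' u := fun u hu =>
    (totalSeqColor_eq_iff σ).mpr fun x hx => h x (by simpa using ⟨u, hu, hx⟩)
  refine propext <| forall₂_congr fun u hu => forall₂_congr fun v hv => ?_
  rw [hc u hu, hc v hv]

lemma monochromatic_pair {w : V ⊕ G.edgeSet → ℝ} {u v : V} :
    Monochromatic G σ {u, v} w ↔ totalSeqColor G σ w u = totalSeqColor G σ w v := by
  refine ⟨fun h => h u (mem_insert_self u _) v (mem_insert_of_mem (mem_singleton_self v)),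
    fun h a ha b hb => ?_⟩
  simp only [mem_insert, mem_singleton] at ha hb
  rcases ha with rfl | rfl <;> rcases hb with rfl | rfl <;> simp [h]

lemma ne_of_forall_not_monochromatic {w : V ⊕ G.edgeSet → ℝ}
    (h : ∀ s ∈ powersetCard 2 univ, ¬ Monochromatic G σ s w) {u v : V} (huv : u ≠ v) :
    totalSeqColor G σ w u ≠ totalSeqColor G σ w v := fun hc =>
  h {u, v} (mem_powersetCard.mpr ⟨subset_univ _, card_pair huv⟩) (monochromatic_pair.mpr hc)

/-- If `{u, v}` is monochromatic, the weights on `incFinset G u \ incFinset G v` are determined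
by the remaining ones. -/
lemma card_filter_monochromatic_mul_pow_le (hk : 0 < k) (hL : ∀ x, #(L x) = k)
    (hdeg : ∀ v, d ≤ G.degree v) {s : Finset V} (hs : #s = 2) :
    #((Fintype.piFinset L).filter (Monochromatic G σ s)) * k ^ d ≤ #(Fintype.piFinset L) := by
  obtain ⟨u, v, huv, rfl⟩ := card_eq_two.mp hs
  have hF : d ≤ #(incFinset G u \ incFinset G v) := by
    have := card_sdiff_add_card_inter (incFinset G u) (incFinset G v)
    have := card_inter_incFinset_le_one (G := G) huv
    have := card_incFinset (G := G) u
    have := hdeg u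
    omega
  set F := incFinset G u \ incFinset G v
  calc #((Fintype.piFinset L).filter (Monochromatic G σ {u, v})) * k ^ d
      ≤ #((Fintype.piFinset L).filter (Monochromatic G σ {u, v})) * ∏ x ∈ F, #(L x) := by
        rw [prod_congr rfl fun x _ => hL x, prod_const]
        exact Nat.mul_le_mul_left _ (Nat.pow_le_pow_right hk hF)
    _ ≤ #(Fintype.piFinset L) := by
      refine card_mul_prod_card_le_card_piFinset (filter_subset _ _) F fun w hw w' hw' h => ?_
      simp only [mem_filter, monochromatic_pair] at hw hw'
      have hv : totalSeqColor G σ w v = totalSeqColor G σ w' v :=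
        (totalSeqColor_eq_iff σ).mpr fun x hx => h x fun hxF => (mem_sdiff.mp hxF).2 hx
      have hu := (totalSeqColor_eq_iff σ (w := w) (w' := w') (v := u)).mp
        (by rw [hw.2, hv, hw'.2])
      funext x
      by_cases hx : x ∈ F
      · exact hu x (mem_sdiff.mp hx).1
      · exact h x hx

/-- Only the pairs meeting the closed neighbourhood of `s`, which has at most `2 (d + 1)`
vertices, can have monochromatic events sharing coordinates with that of `s`. -/
lemma card_dependent_add_one_le (hdeg : ∀ v, G.degree v ≤ d) {s : Finset V} (hs : #s = 2) :
    #(((powersetCard 2 univ).erase s).filter fun t =>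
        ¬ Disjoint (s.biUnion (incFinset G)) (t.biUnion (incFinset G))) + 1 ≤
      (Fintype.card V).choose 2 - (Fintype.card V - 2 * (d + 1)).choose 2 := by
  set S := s.biUnion fun u => insert u (G.neighborFinset u)
  have hS : #S ≤ 2 * (d + 1) := hs ▸ card_biUnion_le_card_mul _ _ _ fun u _ =>
    (card_insert_le _ _).trans <| Nat.succ_le_succ <| G.card_neighborFinset_eq_degree u ▸ hdeg u
  have hsub : (((powersetCard 2 univ).erase s).filter fun t =>
        ¬ Disjoint (s.biUnion (incFinset G)) (t.biUnion (incFinset G))) ⊆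
      ((powersetCard 2 univ).filter fun t => ¬ Disjoint S t).erase s := by
    intro t ht
    simp only [mem_filter, mem_erase, not_disjoint_iff, mem_biUnion] at ht ⊢
    obtain ⟨⟨hts, ht2⟩, x, ⟨u, hu, hxu⟩, v, hv, hxv⟩ := ht
    refine ⟨hts, ht2, v, mem_biUnion.mpr ⟨u, hu, ?_⟩, hv⟩
    rcases eq_or_adj_of_not_disjoint_incFinset (not_disjoint_iff.mpr ⟨x, hxu, hxv⟩) with h | h
    · rw [h]; exact mem_insert_self u _
    · exact mem_insert_of_mem ((G.mem_neighborFinset u v).mpr h)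
  have hs_mem : s ∈ (powersetCard 2 univ).filter fun t => ¬ Disjoint S t := by
    obtain ⟨u, hu⟩ := card_pos.mp (hs ▸ two_pos : 0 < #s)
    exact mem_filter.mpr ⟨mem_powersetCard.mpr ⟨subset_univ s, hs⟩,
      not_disjoint_iff.mpr ⟨u, mem_biUnion.mpr ⟨u, hu, mem_insert_self u _⟩, hu⟩⟩
  have h1 := card_le_card hsub
  have h2 := card_pos.mpr ⟨s, hs_mem⟩
  rw [card_erase_of_mem hs_mem] at h1
  rw [card_filter_not_disjoint_powersetCard] at h1 h2
  have := Nat.choose_le_choose 2 (Nat.sub_le_sub_left hS (Fintype.card V))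
  omega

theorem exists_forall_not_monochromatic_of_localLemma (hk : 0 < k) (hL : ∀ x, #(L x) = k)
    (hmin : ∀ v, d ≤ G.degree v) (hmax : ∀ v, G.degree v ≤ d)
    (hn : 2 * (d + 1) ≤ Fintype.card V)
    (hX : 2 * Real.exp 1 * ((d : ℝ) + 1) * ((Fintype.card V : ℝ) - d) ≤ (k : ℝ) ^ d) :
    ∃ w ∈ Fintype.piFinset L, ∀ s ∈ powersetCard 2 univ, ¬ Monochromatic G σ s w := by
  have hΩ : (Fintype.piFinset L).Nonempty :=
    Fintype.piFinset_nonempty.mpr fun x => card_pos.mp (hL x ▸ hk)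
  have hkd : (0 : ℝ) < (k : ℝ) ^ d := by positivity
  obtain ⟨D, hD⟩ := Nat.exists_eq_add_one_of_ne_zero (n := 2 * (d + 1) * (Fintype.card V - d))
    (Nat.mul_pos (by positivity) (Nat.sub_pos_of_lt (by omega))).ne'
  refine exists_forall_not_of_symmetric_localLemma hΩ (fun s _ => dependsOn_monochromatic s)
    (p := ((k : ℝ) ^ d)⁻¹) (D := D) (fun s hs => ?_) (fun s hs => ?_) ?_
  · rw [le_inv_mul_iff₀ hkd, mul_comm]
    exact_mod_cast card_filter_monochromatic_mul_pow_le hk hL hmin (mem_powersetCard.mp hs).2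
  · have := card_dependent_add_one_le hmax (mem_powersetCard.mp hs).2
    have := choose_two_le_choose_two_sub_add hn
    omega
  · have hDR : (D : ℝ) + 1 = 2 * ((d : ℝ) + 1) * ((Fintype.card V : ℝ) - d) := by
      rw [← Nat.cast_sub (by omega)]; exact_mod_cast hD.symm
    calc Real.exp 1 * ((k : ℝ) ^ d)⁻¹ * ((D : ℝ) + 1)
        = 2 * Real.exp 1 * ((d : ℝ) + 1) * ((Fintype.card V : ℝ) - d) / (k : ℝ) ^ d := by
          rw [hDR]; ring
      _ ≤ 1 := (div_le_one hkd).mpr hX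

theorem exists_forall_not_monochromatic_of_card_lt (hk : 0 < k) (hL : ∀ x, #(L x) = k)
    (hmin : ∀ v, d ≤ G.degree v) (h : (Fintype.card V).choose 2 < k ^ d) :
    ∃ w ∈ Fintype.piFinset L, ∀ s ∈ powersetCard 2 univ, ¬ Monochromatic G σ s w := by
  have hΩ : 0 < #(Fintype.piFinset L) :=
    (Fintype.piFinset_nonempty.mpr fun x => card_pos.mp (hL x ▸ hk)).card_pos
  refine exists_forall_not_of_sum_card_lt (Nat.lt_of_mul_lt_mul_right (a := k ^ d) ?_)
  calc (∑ s ∈ powersetCard 2 univ, #((Fintype.piFinset L).filter (Monochromatic G σ s))) *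
        k ^ d
      ≤ ∑ _s ∈ powersetCard 2 (univ : Finset V), #(Fintype.piFinset L) := by
        rw [sum_mul]
        exact sum_le_sum fun s hs =>
          card_filter_monochromatic_mul_pow_le hk hL hmin (mem_powersetCard.mp hs).2
    _ = (Fintype.card V).choose 2 * #(Fintype.piFinset L) := by
        rw [sum_const, card_powersetCard, card_univ, smul_eq_mul]
    _ < #(Fintype.piFinset L) * k ^ d := by
        rw [mul_comm _ (k ^ d)]; exact Nat.mul_lt_mul_of_pos_right h hΩ

end Monochromatic

/-- If `G` is a `d`-regular graph on `n` vertices, `d ≥ 2`, then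
`ls_σ^t(G) ≤ ⌈(2e(d+1)(n−d))^{1/d}⌉`: for every linear order on `V(G) ⊕ E(G)` and every
assignment of sets of that many reals to the vertices and edges, some total weighting from
the sets gives all vertices pairwise distinct induced total sequences. -/
theorem stmt_17 [Fintype V] [DecidableEq V] (G : SimpleGraph V) [DecidableRel G.Adj]
    (d : ℕ) (hd : 2 ≤ d) (hreg : G.IsRegularOfDegree d)
    (σ : LinearOrder (V ⊕ G.edgeSet))
    (L : V ⊕ G.edgeSet → Finset ℝ)
    (hL : ∀ x, (L x).card =
      ⌈(2 * Real.exp 1 * ((d : ℝ) + 1) * ((Fintype.card V : ℝ) - (d : ℝ)))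
        ^ ((1 : ℝ) / (d : ℝ))⌉₊) :
    ∃ w : V ⊕ G.edgeSet → ℝ, (∀ x, w x ∈ L x) ∧
      ∀ u v : V, u ≠ v → totalSeqColor G σ w u ≠ totalSeqColor G σ w v := by
  rcases isEmpty_or_nonempty V with hV | ⟨⟨v₀⟩⟩
  · exact ⟨0, isEmptyElim, isEmptyElim⟩
  have hdn : d < Fintype.card V := hreg.degree_eq v₀ ▸ G.degree_lt_card_verts v₀
  have hX : 0 < 2 * Real.exp 1 * ((d : ℝ) + 1) * ((Fintype.card V : ℝ) - d) :=
    mul_pos (by positivity) (sub_pos.mpr (by exact_mod_cast hdn))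
  have hk := Nat.ceil_pos.mpr (Real.rpow_pos_of_pos hX ((1 : ℝ) / d))
  suffices ∃ w ∈ Fintype.piFinset L, ∀ s ∈ powersetCard 2 univ, ¬ Monochromatic G σ s w by
    obtain ⟨w, hw, hmono⟩ := this
    exact ⟨w, Fintype.mem_piFinset.mp hw, fun u v => ne_of_forall_not_monochromatic hmono⟩
  have hmin : ∀ v, d ≤ G.degree v := fun v => (hreg.degree_eq v).ge
  rcases le_or_gt (2 * (d + 1)) (Fintype.card V) with hn | hn
  · exact exists_forall_not_monochromatic_of_localLemma hk hL hmin
      (fun v => (hreg.degree_eq v).le) hn (le_natCeil_rpow_one_div_pow hX.le (by omega))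
  · exact exists_forall_not_monochromatic_of_card_lt hk hL hmin
      (choose_two_lt_natCeil_rpow_pow hd hdn hn)
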